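/- Let C be an open connected subset of ℝ², and let L ⊆ C be a connected embedded 1-dimensional C¹ submanifold, closed in C, that is an integral manifold of a nowhere-vanishing C¹ vector field ξ on C. Suppose both components a₁, a₂ of ξ are strictly positive on C. Then L is the graph of a strictly increasing C¹ function f : I → ℝ, where I = Π₁(L) is an open interval and Π₁ is projection onto the first coordinate. -/

import Mathlib

open Set Filter

lemma aux_fst {γ : ℝ → ℝ × ℝ} {v : ℝ × ℝ} {t : ℝ} (h : HasDerivAt γ v t) :
    HasDerivAt (fun s => (γ s).1) v.1 t :=
  (ContinuousLinearMap.fst ℝ ℝ ℝ).hasFDerivAt.comp_hasDerivAt t h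

lemma aux_snd {γ : ℝ → ℝ × ℝ} {v : ℝ × ℝ} {t : ℝ} (h : HasDerivAt γ v t) :
    HasDerivAt (fun s => (γ s).2) v.2 t :=
  (ContinuousLinearMap.snd ℝ ℝ ℝ).hasFDerivAt.comp_hasDerivAt t h

/-- local-to-global uniqueness of solutions of a `C¹` ODE on an open interval. -/
lemma aux_uniq {C : Set (ℝ × ℝ)} {ξ : ℝ × ℝ → ℝ × ℝ} (hCo : IsOpen C)
    (hξ : ContDiffOn ℝ 1 ξ C) {γ δ : ℝ → ℝ × ℝ} {a b t₀ : ℝ}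
    (ht₀ : t₀ ∈ Ioo a b)
    (hγ : ∀ t ∈ Ioo a b, HasDerivAt γ (ξ (γ t)) t ∧ γ t ∈ C)
    (hδ : ∀ t ∈ Ioo a b, HasDerivAt δ (ξ (δ t)) t ∧ δ t ∈ C)
    (he : γ t₀ = δ t₀) : EqOn γ δ (Ioo a b) := by
  -- local uniqueness
  have loc : ∀ t ∈ Ioo a b, γ t = δ t → γ =ᶠ[nhds t] δ := by
    intro t ht heq
    have hmem : γ t ∈ C := (hγ t ht).2
    have hCd : ContDiffAt ℝ 1 ξ (γ t) := hξ.contDiffAt (hCo.mem_nhds hmem)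
    obtain ⟨K, s, hs, hK⟩ := hCd.exists_lipschitzOnWith
    have hIoo : ∀ᶠ u in nhds t, u ∈ Ioo a b := isOpen_Ioo.eventually_mem ht
    have hγs : ∀ᶠ u in nhds t, γ u ∈ s :=
      ((hγ t ht).1.continuousAt).preimage_mem_nhds hs
    have hδs : ∀ᶠ u in nhds t, δ u ∈ s := by
      refine ((hδ t ht).1.continuousAt).preimage_mem_nhds ?_
      rwa [← heq]
    refine ODE_solution_unique_of_eventually (v := fun _ => ξ) (s := fun _ => s)
      (Filter.Eventually.of_forall fun _ => hK) ?_ ?_ heq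
    · filter_upwards [hIoo, hγs] with u hu hus using ⟨(hγ u hu).1, hus⟩
    · filter_upwards [hIoo, hδs] with u hu hus using ⟨(hδ u hu).1, hus⟩
  set u : Set ℝ := {t | ∀ᶠ y in nhds t, γ y = δ y} with hu
  have huo : IsOpen u := isOpen_setOf_eventually_nhds
  have hsub : Ioo a b ⊆ u := by
    refine (isPreconnected_Ioo).subset_of_closure_inter_subset huo ⟨t₀, ht₀, loc t₀ ht₀ he⟩ ?_
    rintro t ⟨htc, ht⟩
    have hZ : u ⊆ {y | γ y = δ y} := fun y hy => hy.self_of_nhds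
    have htZ : t ∈ closure {y | γ y = δ y} := closure_mono hZ htc
    have hne : (nhdsWithin t {y | γ y = δ y}).NeBot :=
      mem_closure_iff_nhdsWithin_neBot.mp htZ
    have h1 : Tendsto γ (nhdsWithin t {y | γ y = δ y}) (nhds (γ t)) :=
      ((hγ t ht).1.continuousAt).continuousWithinAt
    have h2 : Tendsto δ (nhdsWithin t {y | γ y = δ y}) (nhds (δ t)) :=
      ((hδ t ht).1.continuousAt).continuousWithinAt
    have h3 : Tendsto γ (nhdsWithin t {y | γ y = δ y}) (nhds (δ t)) := by
      refine h2.congr' ?_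
      filter_upwards [self_mem_nhdsWithin] with y hy using hy.symm
    have : γ t = δ t := tendsto_nhds_unique h1 h3
    exact loc t ht this
  exact fun t ht => (hsub ht).self_of_nhds

/-- `q` is reachable from `p` by a solution curve inside `L`. -/
def LeafReach (ξ : ℝ × ℝ → ℝ × ℝ) (L : Set (ℝ × ℝ)) (p q : ℝ × ℝ) : Prop :=
  ∃ γ : ℝ → ℝ × ℝ, ∃ a b T : ℝ, a < 0 ∧ 0 < b ∧ T ∈ Set.Ioo a b ∧ γ 0 = p ∧ γ T = q ∧
    ∀ t ∈ Set.Ioo a b, HasDerivAt γ (ξ (γ t)) t ∧ γ t ∈ L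

lemma aux_glue {C : Set (ℝ × ℝ)} {ξ : ℝ × ℝ → ℝ × ℝ} {L : Set (ℝ × ℝ)} (hCo : IsOpen C)
    (hξ : ContDiffOn ℝ 1 ξ C) (hLC : L ⊆ C) {p q : ℝ × ℝ} (hR : LeafReach ξ L p q)
    {δ : ℝ → ℝ × ℝ} {ε s : ℝ} (hs : s ∈ Ioo (-ε) ε)
    (hδ : ∀ t ∈ Ioo (-ε) ε, HasDerivAt δ (ξ (δ t)) t ∧ δ t ∈ L)
    (hq : δ s = q) : ∀ u ∈ Ioo (-ε) ε, LeafReach ξ L p (δ u) := by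
  obtain ⟨γ, a, b, T, ha, hb, hT, h0, hTq, hγ⟩ := hR
  set k := T - s with hk
  -- shifted copy of δ
  set δ' : ℝ → ℝ × ℝ := fun t => δ (t - k) with hδ'
  have hδ'sol : ∀ t ∈ Ioo (k - ε) (k + ε), HasDerivAt δ' (ξ (δ' t)) t ∧ δ' t ∈ L := by
    intro t ht
    have htm : t - k ∈ Ioo (-ε) ε := by constructor <;> [linarith [ht.1]; linarith [ht.2]]
    have hd : HasDerivAt (fun x : ℝ => x - k) 1 t := (hasDerivAt_id t).sub_const k
    have := ((hδ _ htm).1).scomp t hd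
    rw [one_smul] at this
    exact ⟨this, (hδ _ htm).2⟩
  have hT1 : k - ε < T := by simp only [hk]; linarith [hs.1]
  have hT2 : T < k + ε := by simp only [hk]; linarith [hs.2]
  have hTO : T ∈ Ioo (max a (k - ε)) (min b (k + ε)) := by
    simp only [mem_Ioo, max_lt_iff, lt_min_iff]
    exact ⟨⟨hT.1, hT1⟩, hT.2, hT2⟩
  have hOsub1 : Ioo (max a (k - ε)) (min b (k + ε)) ⊆ Ioo a b :=
    Ioo_subset_Ioo (le_max_left _ _) (min_le_left _ _)
  have hOsub2 : Ioo (max a (k - ε)) (min b (k + ε)) ⊆ Ioo (k - ε) (k + ε) :=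
    Ioo_subset_Ioo (le_max_right _ _) (min_le_right _ _)
  have hEq : EqOn γ δ' (Ioo (max a (k - ε)) (min b (k + ε))) := by
    refine aux_uniq hCo hξ hTO
      (fun t ht => ⟨(hγ t (hOsub1 ht)).1, hLC (hγ t (hOsub1 ht)).2⟩)
      (fun t ht => ⟨(hδ'sol t (hOsub2 ht)).1, hLC (hδ'sol t (hOsub2 ht)).2⟩) ?_
    show γ T = δ (T - k)
    rw [hk]; simp only [sub_sub_cancel]
    rw [hTq, hq]
  classical
  set η : ℝ → ℝ × ℝ := fun t => if t ∈ Ioo a b then γ t else δ' t with hη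
  have claim1 : ∀ t ∈ Ioo a b, η t = γ t := fun t ht => if_pos ht
  have claim2 : ∀ t ∈ Ioo (k - ε) (k + ε), η t = δ' t := by
    intro t ht
    by_cases h : t ∈ Ioo a b
    · rw [claim1 t h]
      refine hEq ?_
      simp only [mem_Ioo, max_lt_iff, lt_min_iff]
      exact ⟨⟨h.1, ht.1⟩, ⟨h.2, ht.2⟩⟩
    · exact if_neg h
  have hunion : Ioo (min a (k - ε)) (max b (k + ε)) = Ioo a b ∪ Ioo (k - ε) (k + ε) :=
    (Ioo_union_Ioo' (by linarith [hT.2] : k - ε < b) (by linarith [hT.1] : a < k + ε)).symm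
  have hηsol : ∀ t ∈ Ioo (min a (k - ε)) (max b (k + ε)),
      HasDerivAt η (ξ (η t)) t ∧ η t ∈ L := by
    intro t ht
    rw [hunion] at ht
    rcases ht with ht | ht
    · have hev : η =ᶠ[nhds t] γ := by
        filter_upwards [isOpen_Ioo.eventually_mem ht] with y hy using claim1 y hy
      refine ⟨?_, (claim1 t ht) ▸ (hγ t ht).2⟩
      rw [claim1 t ht]
      exact (hγ t ht).1.congr_of_eventuallyEq hev
    · have hev : η =ᶠ[nhds t] δ' := by
        filter_upwards [isOpen_Ioo.eventually_mem ht] with y hy using claim2 y hy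
      refine ⟨?_, (claim2 t ht) ▸ (hδ'sol t ht).2⟩
      rw [claim2 t ht]
      exact (hδ'sol t ht).1.congr_of_eventuallyEq hev
  intro u hu
  refine ⟨η, min a (k - ε), max b (k + ε), k + u, ?_, ?_, ?_, ?_, ?_, hηsol⟩
  · exact lt_of_le_of_lt (min_le_left _ _) ha
  · exact lt_of_lt_of_le hb (le_max_left _ _)
  · rw [hunion]
    exact Or.inr ⟨by linarith [hu.1], by linarith [hu.2]⟩
  · rw [claim1 0 ⟨ha, hb⟩]; exact h0
  · have : k + u ∈ Ioo (k - ε) (k + ε) := ⟨by linarith [hu.1], by linarith [hu.2]⟩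
    rw [claim2 _ this]
    show δ (k + u - k) = δ u
    congr 1; ring

lemma aux_all {C : Set (ℝ × ℝ)} {ξ : ℝ × ℝ → ℝ × ℝ} {L : Set (ℝ × ℝ)} (hCo : IsOpen C)
    (hξ : ContDiffOn ℝ 1 ξ C) (hLC : L ⊆ C) (hLconn : IsConnected L)
    (hint : ∀ p ∈ L, ∃ ε > 0, ∃ γ : ℝ → ℝ × ℝ, γ 0 = p ∧
      (∀ t ∈ Set.Ioo (-ε) ε, HasDerivAt γ (ξ (γ t)) t ∧ γ t ∈ L) ∧
      ∃ U ∈ nhds p, L ∩ U = γ '' Set.Ioo (-ε) ε) :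
    ∀ p ∈ L, ∀ q ∈ L, LeafReach ξ L p q := by
  intro p hp
  haveI : PreconnectedSpace L := Subtype.preconnectedSpace hLconn.isPreconnected
  set A : Set L := {q | LeafReach ξ L p ↑q} with hA
  have hAo : IsOpen A := by
    rw [isOpen_iff_mem_nhds]
    rintro q hq
    obtain ⟨ε, hε, δ, hδ0, hδsol, U, hU, hLU⟩ := hint ↑q q.2
    have h0 : (0 : ℝ) ∈ Ioo (-ε) ε := ⟨neg_lt_zero.mpr hε, hε⟩
    have hall : ∀ w ∈ L ∩ U, LeafReach ξ L p w := by
      intro w hw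
      rw [hLU] at hw
      obtain ⟨u, hu, rfl⟩ := hw
      exact aux_glue hCo hξ hLC hq h0 hδsol hδ0 u hu
    have hUn : (Subtype.val ⁻¹' U : Set L) ∈ nhds q :=
      continuous_subtype_val.continuousAt.preimage_mem_nhds hU
    exact mem_of_superset hUn fun w hw => hall ↑w ⟨w.2, hw⟩
  have hAc : IsClosed A := by
    rw [isClosed_iff_nhds]
    intro q hq
    obtain ⟨ε, hε, δ, hδ0, hδsol, U, hU, hLU⟩ := hint ↑q q.2
    have h0 : (0 : ℝ) ∈ Ioo (-ε) ε := ⟨neg_lt_zero.mpr hε, hε⟩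
    have hUn : (Subtype.val ⁻¹' U : Set L) ∈ nhds q :=
      continuous_subtype_val.continuousAt.preimage_mem_nhds hU
    obtain ⟨w, hwU, hwA⟩ := hq _ hUn
    have hwL : ↑w ∈ L ∩ U := ⟨w.2, hwU⟩
    rw [hLU] at hwL
    obtain ⟨s, hs, hws⟩ := hwL
    have := aux_glue hCo hξ hLC hwA hs hδsol hws 0 h0
    show LeafReach ξ L p ↑q
    rwa [hδ0] at this
  have hrefl : (⟨p, hp⟩ : L) ∈ A := by
    obtain ⟨ε, hε, δ, hδ0, hδsol, U, hU, hLU⟩ := hint p hp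
    exact ⟨δ, -ε, ε, 0, neg_lt_zero.mpr hε, hε, ⟨neg_lt_zero.mpr hε, hε⟩, hδ0, hδ0, hδsol⟩
  have : A = univ := (isClopen_iff.mp ⟨hAc, hAo⟩).resolve_left (by
    intro h; rw [h] at hrefl; exact hrefl)
  intro q hq
  have : (⟨q, hq⟩ : L) ∈ A := this ▸ mem_univ _
  exact this

/-- strict monotonicity of both coordinates along a solution curve. -/
lemma aux_mono {C : Set (ℝ × ℝ)} {ξ : ℝ × ℝ → ℝ × ℝ}
    (hpos : ∀ p ∈ C, 0 < (ξ p).1 ∧ 0 < (ξ p).2) {γ : ℝ → ℝ × ℝ} {a b : ℝ}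
    (hsol : ∀ t ∈ Ioo a b, HasDerivAt γ (ξ (γ t)) t ∧ γ t ∈ C) :
    StrictMonoOn (fun t => (γ t).1) (Ioo a b) ∧
      StrictMonoOn (fun t => (γ t).2) (Ioo a b) := by
  constructor
  · refine strictMonoOn_of_hasDerivWithinAt_pos (f' := fun t => (ξ (γ t)).1)
      (convex_Ioo a b) (fun t ht => ((aux_fst (hsol t ht).1).continuousAt).continuousWithinAt)
      (fun t ht => ?_) (fun t ht => ?_)
    · rw [interior_Ioo] at ht
      exact (aux_fst (hsol t ht).1).hasDerivWithinAt
    · rw [interior_Ioo] at ht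
      exact (hpos _ (hsol t ht).2).1
  · refine strictMonoOn_of_hasDerivWithinAt_pos (f' := fun t => (ξ (γ t)).2)
      (convex_Ioo a b) (fun t ht => ((aux_snd (hsol t ht).1).continuousAt).continuousWithinAt)
      (fun t ht => ?_) (fun t ht => ?_)
    · rw [interior_Ioo] at ht
      exact (aux_snd (hsol t ht).1).hasDerivWithinAt
    · rw [interior_Ioo] at ht
      exact (hpos _ (hsol t ht).2).2

/-- a connected embedded `C¹` leaf `L`, closed in an open connected set
`C ⊆ ℝ²`, of a nowhere-vanishing `C¹` vector field `ξ` whose two components are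
strictly positive on `C`, is the graph of a strictly increasing `C¹` function defined
on the open interval `I = Π₁(L)`. -/
theorem stmt6 (C : Set (ℝ × ℝ)) (hCo : IsOpen C) (hCconn : IsConnected C)
    (ξ : ℝ × ℝ → ℝ × ℝ) (hξ : ContDiffOn ℝ 1 ξ C)
    (hξne : ∀ p ∈ C, ξ p ≠ 0)
    (hpos : ∀ p ∈ C, 0 < (ξ p).1 ∧ 0 < (ξ p).2)
    (L : Set (ℝ × ℝ)) (hLC : L ⊆ C) (hLconn : IsConnected L)
    (hLclosed : ∀ p ∈ C, p ∈ closure L → p ∈ L)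
    -- `L` is an embedded 1-dimensional integral manifold of `ξ`:
    (hint : ∀ p ∈ L, ∃ ε > 0, ∃ γ : ℝ → ℝ × ℝ, γ 0 = p ∧
      (∀ t ∈ Set.Ioo (-ε) ε, HasDerivAt γ (ξ (γ t)) t ∧ γ t ∈ L) ∧
      ∃ U ∈ nhds p, L ∩ U = γ '' Set.Ioo (-ε) ε) :
    IsOpen (Prod.fst '' L) ∧ (Prod.fst '' L).OrdConnected ∧
    ∃ f : ℝ → ℝ, StrictMonoOn f (Prod.fst '' L) ∧
      ContDiffOn ℝ 1 f (Prod.fst '' L) ∧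
      L = {p : ℝ × ℝ | p.1 ∈ Prod.fst '' L ∧ p.2 = f p.1} := by
  classical
  have hsolC : ∀ {γ : ℝ → ℝ × ℝ} {a b : ℝ},
      (∀ t ∈ Ioo a b, HasDerivAt γ (ξ (γ t)) t ∧ γ t ∈ L) →
      ∀ t ∈ Ioo a b, HasDerivAt γ (ξ (γ t)) t ∧ γ t ∈ C :=
    fun h t ht => ⟨(h t ht).1, hLC (h t ht).2⟩
  -- the fundamental trichotomy
  have key : ∀ p ∈ L, ∀ q ∈ L,
      p = q ∨ (p.1 < q.1 ∧ p.2 < q.2) ∨ (q.1 < p.1 ∧ q.2 < p.2) := by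
    intro p hp q hq
    obtain ⟨γ, a, b, T, ha, hb, hT, h0, hTq, hsol⟩ := aux_all hCo hξ hLC hLconn hint p hp q hq
    have h0m : (0 : ℝ) ∈ Ioo a b := ⟨ha, hb⟩
    obtain ⟨hm1, hm2⟩ := aux_mono hpos (hsolC hsol)
    rcases lt_trichotomy T 0 with h | h | h
    · refine Or.inr (Or.inr ⟨?_, ?_⟩)
      · have := hm1 hT h0m h; simpa [h0, hTq] using this
      · have := hm2 hT h0m h; simpa [h0, hTq] using this
    · exact Or.inl (by rw [← h0, ← hTq, h])
    · refine Or.inr (Or.inl ⟨?_, ?_⟩)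
      · have := hm1 h0m hT h; simpa [h0, hTq] using this
      · have := hm2 h0m hT h; simpa [h0, hTq] using this
  have huniq : ∀ p ∈ L, ∀ q ∈ L, p.1 = q.1 → p = q := by
    intro p hp q hq h
    rcases key p hp q hq with h' | h' | h'
    · exact h'
    · exact absurd h (ne_of_lt h'.1)
    · exact absurd h.symm (ne_of_lt h'.1)
  set f : ℝ → ℝ := fun x => if h : ∃ y, (x, y) ∈ L then h.choose else 0 with hfdef
  have hfmem : ∀ x ∈ Prod.fst '' L, (x, f x) ∈ L := by
    rintro x ⟨p, hp, rfl⟩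
    have hex : ∃ y, (p.1, y) ∈ L := ⟨p.2, by rwa [Prod.mk.eta]⟩
    simp only [hfdef, dif_pos hex]
    exact hex.choose_spec
  have hfval : ∀ p ∈ L, f p.1 = p.2 := by
    intro p hp
    have h1 : (p.1, f p.1) ∈ L := hfmem p.1 ⟨p, hp, rfl⟩
    have := huniq _ h1 _ hp rfl
    exact congrArg Prod.snd this
  -- openness of the projection
  have hSopen : IsOpen (Prod.fst '' L) := by
    rw [isOpen_iff_mem_nhds]
    rintro x ⟨p, hp, rfl⟩
    obtain ⟨ε, hε, γ, hγ0, hγsol, -⟩ := hint p hp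
    obtain ⟨hm1, -⟩ := aux_mono hpos (hsolC hγsol)
    have hm : ε / 2 ∈ Ioo (-ε) ε := ⟨by linarith, by linarith⟩
    have hmn : -(ε / 2) ∈ Ioo (-ε) ε := ⟨by linarith, by linarith⟩
    have h0 : (0 : ℝ) ∈ Ioo (-ε) ε := ⟨by linarith, hε⟩
    have h1 : (γ (-(ε / 2))).1 < p.1 := by
      have := hm1 hmn h0 (by linarith); simpa [hγ0] using this
    have h2 : p.1 < (γ (ε / 2)).1 := by
      have := hm1 h0 hm (by linarith); simpa [hγ0] using this
    refine mem_of_superset (Ioo_mem_nhds h1 h2) ?_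
    intro z hz
    have hc : ContinuousOn (fun t => (γ t).1) (Icc (-(ε / 2)) (ε / 2)) := by
      intro t ht
      have htI : t ∈ Ioo (-ε) ε := ⟨by linarith [ht.1], by linarith [ht.2]⟩
      exact ((aux_fst (hγsol t htI).1).continuousAt).continuousWithinAt
    have := intermediate_value_Icc (by linarith : -(ε / 2) ≤ ε / 2) hc
      (⟨le_of_lt hz.1, le_of_lt hz.2⟩ : z ∈ Icc _ _)
    obtain ⟨t, ht, htz⟩ := this
    have htI : t ∈ Ioo (-ε) ε := ⟨by linarith [ht.1], by linarith [ht.2]⟩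
    exact ⟨γ t, (hγsol t htI).2, htz⟩
  have hSord : (Prod.fst '' L).OrdConnected :=
    ((hLconn.image _ continuous_fst.continuousOn).isPreconnected).ordConnected
  have hgraph : L = {p : ℝ × ℝ | p.1 ∈ Prod.fst '' L ∧ p.2 = f p.1} := by
    ext p
    constructor
    · intro hp
      exact ⟨⟨p, hp, rfl⟩, (hfval p hp).symm⟩
    · rintro ⟨hx, hy⟩
      have : (p.1, f p.1) ∈ L := hfmem p.1 hx
      rwa [← hy, Prod.mk.eta] at this
  have hfsm : StrictMonoOn f (Prod.fst '' L) := by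
    intro x1 hx1 x2 hx2 hlt
    have h1 : (x1, f x1) ∈ L := hfmem _ hx1
    have h2 : (x2, f x2) ∈ L := hfmem _ hx2
    rcases key _ h1 _ h2 with h | h | h
    · exact absurd (congrArg Prod.fst h) (ne_of_lt hlt)
    · exact h.2
    · exact absurd hlt (not_lt_of_gt h.1)
  -- the derivative of f
  have hasDeriv : ∀ p ∈ L, HasDerivAt f ((ξ p).2 / (ξ p).1) p.1 := by
    intro p hp
    obtain ⟨ε, hε, γ, hγ0, hγsol, -⟩ := hint p hp
    set x1 : ℝ → ℝ := fun t => (γ t).1 with hx1def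
    have h0I : (0:ℝ) ∈ Ioo (-ε) ε := ⟨neg_lt_zero.mpr hε, hε⟩
    have hx1d : ∀ t ∈ Ioo (-ε) ε, HasDerivAt x1 ((ξ (γ t)).1) t :=
      fun t ht => aux_fst (hγsol t ht).1
    have hγc : ContinuousOn γ (Ioo (-ε) ε) :=
      fun t ht => ((hγsol t ht).1.continuousAt).continuousWithinAt
    have hCD : ContDiffOn ℝ 1 x1 (Ioo (-ε) ε) := by
      rw [show (1 : WithTop ℕ∞) = 0 + 1 by norm_num,
        contDiffOn_succ_iff_deriv_of_isOpen isOpen_Ioo]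
      refine ⟨fun t ht => ((hx1d t ht).differentiableAt).differentiableWithinAt, by simp, ?_⟩
      rw [contDiffOn_zero]
      refine ContinuousOn.congr (continuous_fst.comp_continuousOn
        (hξ.continuousOn.comp hγc (fun t ht => hLC (hγsol t ht).2))) ?_
      intro t ht
      exact (hx1d t ht).deriv
    have hd0 : HasDerivAt x1 ((ξ p).1) 0 := by
      have := hx1d 0 h0I; rwa [hγ0] at this
    have hsd : HasStrictDerivAt x1 ((ξ p).1) 0 :=
      (hCD.contDiffAt (Ioo_mem_nhds h0I.1 h0I.2)).hasStrictDerivAt' hd0 one_ne_zero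
    have hne : (ξ p).1 ≠ 0 := ne_of_gt (hpos p (hLC hp)).1
    have E := hsd.hasStrictFDerivAt_equiv hne
    set g : ℝ → ℝ := hsd.localInverse x1 ((ξ p).1) 0 hne with hgdef
    have hg1 : ∀ᶠ z in nhds (x1 0), x1 (g z) = z := E.eventually_right_inverse
    have hgc : ContinuousAt g (x1 0) := E.localInverse_continuousAt
    have hg0 : g (x1 0) = 0 := E.localInverse_apply_image
    have hgI : ∀ᶠ z in nhds (x1 0), g z ∈ Ioo (-ε) ε := by
      refine hgc.preimage_mem_nhds ?_
      rw [hg0]; exact Ioo_mem_nhds h0I.1 h0I.2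
    have hfev : f =ᶠ[nhds (x1 0)] fun z => (γ (g z)).2 := by
      filter_upwards [hg1, hgI] with z h1 h2
      have hmem : γ (g z) ∈ L := (hγsol _ h2).2
      have := hfval _ hmem
      rwa [show (γ (g z)).1 = z from h1] at this
    have hgd : HasDerivAt g (((ξ p).1)⁻¹) (x1 0) := (hsd.to_localInverse hne).hasDerivAt
    have h2d : HasDerivAt (fun t => (γ t).2) ((ξ p).2) (g (x1 0)) := by
      rw [hg0]
      have := aux_snd (hγsol 0 h0I).1
      rwa [hγ0] at this
    have hcomp : HasDerivAt (fun z => (γ (g z)).2) ((ξ p).2 * ((ξ p).1)⁻¹) (x1 0) :=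
      HasDerivAt.comp _ h2d hgd
    have hfd : HasDerivAt f ((ξ p).2 * ((ξ p).1)⁻¹) (x1 0) :=
      hcomp.congr_of_eventuallyEq hfev
    rw [div_eq_mul_inv]
    have hx10 : x1 0 = p.1 := by rw [hx1def]; simp [hγ0]
    rwa [hx10] at hfd
  refine ⟨hSopen, hSord, f, hfsm, ?_, hgraph⟩
  rw [show (1 : WithTop ℕ∞) = 0 + 1 by norm_num,
    contDiffOn_succ_iff_deriv_of_isOpen hSopen]
  have hdOn : ∀ x ∈ Prod.fst '' L, HasDerivAt f ((ξ (x, f x)).2 / (ξ (x, f x)).1) x := by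
    intro x hx
    have := hasDeriv _ (hfmem x hx)
    exact this
  refine ⟨fun x hx => ((hdOn x hx).differentiableAt).differentiableWithinAt,
    by simp, ?_⟩
  rw [contDiffOn_zero]
  have hfc : ContinuousOn f (Prod.fst '' L) :=
    fun x hx => ((hdOn x hx).continuousAt).continuousWithinAt
  have hmapL : MapsTo (fun x => (x, f x)) (Prod.fst '' L) C := fun x hx => hLC (hfmem x hx)
  have hξc : ContinuousOn (fun x => ξ (x, f x)) (Prod.fst '' L) :=
    hξ.continuousOn.comp (continuousOn_id.prodMk hfc) hmapL
  refine ContinuousOn.congr (ContinuousOn.div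
    (continuous_snd.comp_continuousOn hξc) (continuous_fst.comp_continuousOn hξc)
    (fun x hx => ne_of_gt (hpos _ (hmapL hx)).1)) ?_
  intro x hx
  exact (hdOn x hx).deriv
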